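/- arXiv:1808.09687 — 2 statements merged into one kernel-verified Lean document; each statement's English description precedes it below -/
import Mathlib

section
/- Let P¹, P² be mutually orthogonal linear subspaces of ℝⁿ with P¹ ⊕ P² = ℝⁿ. Let w, w₁, w₂, w₃ be unit vectors in ℝⁿ such that ⟨w, w_i⟩ = 0 for i = 1,2,3 and ⟨w_i, w_j⟩ = −1/2 for i ≠ j, and suppose that for each i ∈ {1,2,3} there exists α_i ∈ [0,π/2] such that the 2-plane span{w, w_i} is 2-analytic between P¹ and P² with angle α_i. Then there exists α ∈ [0,π/2] such that α₁ = α₂ = α₃ = α, the subspace V = span{w, w₁, w₂, w₃} is 3-dimensional, and V is 3-analytic between P¹ and P² with angle α. (This is the linear-algebra content of the statement that every tangent Y-cone of a measure minimizer lies in an analytic 3-subspace between P¹ and P².) -/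
open Set Metric MeasureTheory Filter Pointwise
open scoped ENNReal RealInnerProductSpace NNReal

noncomputable section

/-- `Euc n` is the Euclidean space `ℝⁿ`. -/
abbrev Euc (n : ℕ) : Type := EuclideanSpace ℝ (Fin n)

variable {n : ℕ}

/-- A cone centered at `0`. -/
def IsCone0 (C : Set (Euc n)) : Prop :=
  (0 : Euc n) ∈ C ∧ ∀ t : ℝ, 0 < t → t • C = C

/-- `f` is (the time-one map of) a Lipschitz deformation in the set `U`. -/
def IsDeformationIn (U : Set (Euc n)) (f : Euc n → Euc n) : Prop :=
  ∃ φ : ℝ → Euc n → Euc n,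
    (∀ x ∈ U, φ 0 x = x) ∧
    (∀ t ∈ Icc (0:ℝ) 1, MapsTo (φ t) U U) ∧
    ContinuousOn (fun p : ℝ × Euc n => φ p.1 p.2) (Icc (0:ℝ) 1 ×ˢ U) ∧
    (∃ L : ℝ≥0, LipschitzOnWith L (φ 1) U) ∧
    (∀ x ∈ U, φ 1 x = f x) ∧
    closure (⋃ t ∈ Icc (0:ℝ) 1,
        ({x ∈ U | φ t x ≠ x} ∪ φ t '' {x ∈ U | φ t x ≠ x})) ⊆ U ∧
    IsCompact (closure (⋃ t ∈ Icc (0:ℝ) 1,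
        ({x ∈ U | φ t x ≠ x} ∪ φ t '' {x ∈ U | φ t x ≠ x})))

/-- `E` is a `d`-dimensional Almgren minimal set in the open set `U`
(`E ⊆ U` relatively closed). -/
def IsAlmgrenMinimalIn (d : ℕ) (U E : Set (Euc n)) : Prop :=
  E ⊆ U ∧ closure E ∩ U ⊆ E ∧
  (∀ (x : Euc n) (r : ℝ), closedBall x r ⊆ U → μH[(d:ℝ)] (E ∩ closedBall x r) < ⊤) ∧
  ∀ f : Euc n → Euc n, IsDeformationIn U f →
    μH[(d:ℝ)] (E \ f '' E) ≤ μH[(d:ℝ)] (f '' E \ E)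

/-- A set is reduced if it has positive `H^d` measure in every ball centered on it. -/
def IsReducedSet (d : ℕ) (E : Set (Euc n)) : Prop :=
  ∀ x ∈ E, ∀ r : ℝ, 0 < r → 0 < μH[(d:ℝ)] (E ∩ ball x r)

/-- A (reduced) `d`-dimensional Almgren minimal cone in `ℝⁿ`. -/
def IsAlmgrenMinimalCone (d : ℕ) (C : Set (Euc n)) : Prop :=
  IsClosed C ∧ IsCone0 C ∧ IsReducedSet d C ∧ IsAlmgrenMinimalIn d univ C

/-- The class `F(E,U)` of deformations of `E` in `U`. -/
def deformClass (U E : Set (Euc n)) : Set (Set (Euc n)) :=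
  {F | ∃ f, IsDeformationIn U f ∧ F = (E \ U) ∪ f '' (E ∩ U)}

/-- Convergence in local Hausdorff distance on every compact set. -/
def LocHausTendsto (S : ℕ → Set (Euc n)) (F : Set (Euc n)) : Prop :=
  ∀ K : Set (Euc n), IsCompact K →
    Tendsto (fun k => (⨆ y ∈ S k ∩ K, infDist y F) ⊔ (⨆ y ∈ F ∩ K, infDist y (S k)))
      atTop (nhds 0)

/-- The class `F̄(E,U)` of limits of deformations of `E` in `U`. -/
def limDeformClass (d : ℕ) (U E : Set (Euc n)) : Set (Set (Euc n)) :=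
  {F | F ⊆ closure U ∧ IsClosed F ∧
    (∃ S : ℕ → Set (Euc n), (∀ k, S k ∈ deformClass U E) ∧ LocHausTendsto S F) ∧
    (∀ (x : Euc n) (r : ℝ), μH[(d:ℝ)] (F ∩ closedBall x r) < ⊤) ∧
    μH[(d:ℝ)] ((F ∩ frontier U) \ E) = 0}

/-- `C` is Almgren unique in the domain `U`. -/
def AlmgrenUniqueIn (d : ℕ) (C U : Set (Euc n)) : Prop :=
  ∀ E ∈ limDeformClass d U C,
    μH[(d:ℝ)] E = (⨅ F ∈ limDeformClass d U C, μH[(d:ℝ)] F) → E = C ∩ closure U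

/-- `C` is Almgren unique (in every domain). -/
def AlmgrenUnique (d : ℕ) (C : Set (Euc n)) : Prop :=
  ∀ U : Set (Euc n), IsOpen U → IsConnected U → AlmgrenUniqueIn d C U

/-- `F` is a `δ`-sliding deformation of `E` in `cl(U)`. -/
def IsSlidingDeformation (δ : ℝ) (U E F : Set (Euc n)) : Prop :=
  ∃ φ : ℝ → Euc n → Euc n,
    (∀ x ∈ closure U, φ 0 x = x) ∧
    (∀ t ∈ Icc (0:ℝ) 1, MapsTo (φ t) (closure U) (closure U)) ∧
    ContinuousOn (fun p : ℝ × Euc n => φ p.1 p.2) (Icc (0:ℝ) 1 ×ˢ closure U) ∧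
    (∃ L : ℝ≥0, LipschitzOnWith L (φ 1) (closure U)) ∧
    (∀ t ∈ Icc (0:ℝ) 1, MapsTo (φ t) (frontier U) (frontier U)) ∧
    (∀ t ∈ Icc (0:ℝ) 1, ∀ x ∈ E ∩ frontier U, ‖φ t x - x‖ < δ) ∧
    F = φ 1 '' E

/-- The class `F̄_δ(E, cl U)` of limits of `δ`-sliding deformations of `E`. -/
def slidingLimClass (d : ℕ) (δ : ℝ) (U E : Set (Euc n)) : Set (Set (Euc n)) :=
  {F | F ⊆ closure U ∧ IsClosed F ∧
    (∃ S : ℕ → Set (Euc n), (∀ k, IsSlidingDeformation δ U E (S k)) ∧ LocHausTendsto S F) ∧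
    (∀ (x : Euc n) (r : ℝ), μH[(d:ℝ)] (F ∩ closedBall x r) < ⊤) ∧
    μH[(d:ℝ)] ((F ∩ frontier U) \ E) = 0}

/-- `E` is `δ`-sliding minimal in `cl(U)`. -/
def IsSlidingMinimal (d : ℕ) (δ : ℝ) (U E : Set (Euc n)) : Prop :=
  ∀ F ∈ slidingLimClass d δ U E, μH[(d:ℝ)] (E \ F) ≤ μH[(d:ℝ)] (F \ E)

/-- The trace of a cone on the unit sphere. -/
def spherePart (K : Set (Euc n)) : Set (Euc n) := K ∩ sphere (0 : Euc n) 1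

/-- A point of `K ∩ ∂B(0,1)` at which the net `K ∩ ∂B(0,1)` is not locally
homeomorphic to an interval (a `Y` point of the net). -/
def IsYPoint (K : Set (Euc n)) (a : Euc n) : Prop :=
  a ∈ spherePart K ∧
  ¬ ∃ W : Set (Euc n), IsOpen W ∧ a ∈ W ∧
      Nonempty ((spherePart K ∩ W : Set (Euc n)) ≃ₜ (Set.Ioo (0:ℝ) 1))

/-- The convex domain `U(K,η)` associated to a `2`-dimensional minimal cone `K`. -/
def UDomain (K : Set (Euc n)) (η : ℝ) : Set (Euc n) :=
  {x ∈ ball (0 : Euc n) 1 |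
    (∀ y ∈ spherePart K, ⟪x, y⟫ < 1 - η) ∧
    (∀ a : Euc n, IsYPoint K a → ⟪x, a⟫ < 1 - 2 * η)}

/-- `K` is sliding stable: for some small `η` and some `δ > 0`, `K` is
`δ`-sliding minimal in `cl(U(K,η))`. -/
def SlidingStable (d : ℕ) (K : Set (Euc n)) : Prop :=
  ∃ η δ : ℝ, 0 < η ∧ η < 1 / 100 ∧ 0 < δ ∧
    IsSlidingMinimal d δ (UDomain K η) (K ∩ closure (UDomain K η))

/-- The minimal angle between two cones: the largest `θ ∈ [0,π/2]` such that
`|⟨u,v⟩| ≤ cos θ‖u‖‖v‖` for all `u ∈ A`, `v ∈ B`. -/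
def minAngle (A B : Set (Euc n)) : ℝ :=
  sSup {θ : ℝ | θ ∈ Icc 0 (Real.pi / 2) ∧
    ∀ u ∈ A, ∀ v ∈ B, |⟪u, v⟫| ≤ Real.cos θ * (‖u‖ * ‖v‖)}

/-- `|x₁ ∧ ⋯ ∧ x_d|`: the `d`-volume of the parallelepiped spanned by `x₁,…,x_d`,
i.e. the square root of the Gram determinant. -/
def wedgeNorm {d : ℕ} (x : Fin d → Euc n) : ℝ :=
  Real.sqrt (Matrix.det (Matrix.of fun i j => ⟪x i, x j⟫))

/-- The isometric inclusion `ℝ^{n₁} → ℝ^{n₁} × {0} ⊆ ℝ^{n₁+n₂}`. -/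
def pad1 (n₁ n₂ : ℕ) (x : Euc n₁) : Euc (n₁ + n₂) :=
  (EuclideanSpace.equiv (Fin (n₁ + n₂)) ℝ).symm
    (fun i => if h : (i : ℕ) < n₁ then x ⟨i, h⟩ else 0)

/-- The isometric inclusion `ℝ^{n₂} → {0} × ℝ^{n₂} ⊆ ℝ^{n₁+n₂}`. -/
def pad2 (n₁ n₂ : ℕ) (x : Euc n₂) : Euc (n₁ + n₂) :=
  (EuclideanSpace.equiv (Fin (n₁ + n₂)) ℝ).symm
    (fun i => if _ : (i : ℕ) < n₁ then 0 else x ⟨(i : ℕ) - n₁, by omega⟩)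

/-- The orthogonal union `E₁ ∪⊥ E₂ = (E₁ × {0}) ∪ ({0} × E₂) ⊆ ℝ^{n₁+n₂}`. -/
def orthUnion (n₁ n₂ : ℕ) (E₁ : Set (Euc n₁)) (E₂ : Set (Euc n₂)) : Set (Euc (n₁ + n₂)) :=
  pad1 n₁ n₂ '' E₁ ∪ pad2 n₁ n₂ '' E₂

/-- The projection `ℝ^{n₁+n₂} → ℝ^{n₁}` on the first factor. -/
def proj1 (n₁ n₂ : ℕ) (x : Euc (n₁ + n₂)) : Euc n₁ :=
  (EuclideanSpace.equiv (Fin n₁) ℝ).symm fun i => x (Fin.castAdd n₂ i)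

/-- The projection `ℝ^{n₁+n₂} → ℝ^{n₂}` on the second factor. -/
def proj2 (n₁ n₂ : ℕ) (x : Euc (n₁ + n₂)) : Euc n₂ :=
  (EuclideanSpace.equiv (Fin n₂) ℝ).symm fun i => x (Fin.natAdd n₁ i)

/-- Orthogonal projection of `ℝ^{n₁+n₂}` onto `P¹ = ℝ^{n₁} × {0}`. -/
def projTo1 (n₁ n₂ : ℕ) (x : Euc (n₁ + n₂)) : Euc (n₁ + n₂) := pad1 n₁ n₂ (proj1 n₁ n₂ x)

/-- Orthogonal projection of `ℝ^{n₁+n₂}` onto `P² = {0} × ℝ^{n₂}`. -/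
def projTo2 (n₁ n₂ : ℕ) (x : Euc (n₁ + n₂)) : Euc (n₁ + n₂) := pad2 n₁ n₂ (proj2 n₁ n₂ x)

/-- `T` is the approximate tangent `d`-plane of `F` at `x`. -/
def IsApproxTangent (d : ℕ) (F : Set (Euc n)) (x : Euc n) (T : Submodule ℝ (Euc n)) : Prop :=
  Module.finrank ℝ T = d ∧
  0 < Filter.limsup (fun r : ℝ => μH[(d:ℝ)] (F ∩ ball x r) / ENNReal.ofReal (r ^ d))
      (nhdsWithin 0 (Ioi 0)) ∧
  ∀ ε : ℝ, 0 < ε →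
    Tendsto (fun r : ℝ =>
        μH[(d:ℝ)] ((F ∩ ball x r) ∩ {y | ε * ‖y - x‖ < infDist (y - x) (T : Set (Euc n))}) /
          ENNReal.ofReal (r ^ d))
      (nhdsWithin 0 (Ioi 0)) (nhds 0)

/-- `F` is `d`-rectifiable. -/
def IsRectifiable (d : ℕ) (F : Set (Euc n)) : Prop :=
  ∃ f : ℕ → (Euc d → Euc n),
    (∀ k, ∃ L : ℝ≥0, LipschitzWith L (f k)) ∧
    μH[(d:ℝ)] (F \ ⋃ k, range (f k)) = 0

/-- Orthogonal projection onto a submodule, as a map of the ambient space. -/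
def oproj (P : Submodule ℝ (Euc n)) (v : Euc n) : Euc n :=
  (P.orthogonalProjectionOnto v : Euc n)

/-- A nonzero vector `z` has angle `α` between `P¹` and `P²`. -/
def HasAngleBetween (P₁ P₂ : Submodule ℝ (Euc n)) (α : ℝ) (z : Euc n) : Prop :=
  ‖oproj P₁ z‖ = Real.cos α * ‖z‖ ∧ ‖oproj P₂ z‖ = Real.sin α * ‖z‖

/-- `T` is a `d`-analytic subspace between `P¹` and `P²` with angle `α`. -/
def IsAnalyticSubspace (P₁ P₂ : Submodule ℝ (Euc n)) (α : ℝ) (T : Submodule ℝ (Euc n)) : Prop :=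
  ∀ z ∈ T, z ≠ 0 → HasAngleBetween P₁ P₂ α z

/-- The point `(a,b) ∈ ℝ²`. -/
def mk2 (a b : ℝ) : Euc 2 := (EuclideanSpace.equiv (Fin 2) ℝ).symm ![a, b]

/-- The sector `R_α = {(r,θ) : r₀ ≤ r ≤ 1, 0 ≤ θ ≤ π/α}` (polar coordinates). -/
def sectorR (α : ℕ) (r₀ : ℝ) : Set (Euc 2) :=
  {x | ∃ r θ : ℝ, r₀ ≤ r ∧ r ≤ 1 ∧ 0 ≤ θ ∧ θ ≤ Real.pi / α ∧
    x = mk2 (r * Real.cos θ) (r * Real.sin θ)}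

/-- The inner arc `L_α = {(r₀,θ) : 0 ≤ θ ≤ π/α}`. -/
def sectorL (α : ℕ) (r₀ : ℝ) : Set (Euc 2) :=
  {x | ∃ θ : ℝ, 0 ≤ θ ∧ θ ≤ Real.pi / α ∧
    x = mk2 (r₀ * Real.cos θ) (r₀ * Real.sin θ)}

/-- The outer arc `K_α = {(1,θ) : 0 ≤ θ ≤ π/α}`. -/
def sectorK (α : ℕ) : Set (Euc 2) :=
  {x | ∃ θ : ℝ, 0 ≤ θ ∧ θ ≤ Real.pi / α ∧ x = mk2 (Real.cos θ) (Real.sin θ)}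

/-- The annular sector `{(r,θ) : s/4 ≤ r ≤ 2s, 0 ≤ θ ≤ θ₀}`. -/
def annR (θ₀ s : ℝ) : Set (Euc 2) :=
  {x | ∃ r θ : ℝ, s / 4 ≤ r ∧ r ≤ 2 * s ∧ 0 ≤ θ ∧ θ ≤ θ₀ ∧
    x = mk2 (r * Real.cos θ) (r * Real.sin θ)}

/-- The annular sector `{(r,θ) : s/4 ≤ r ≤ s, 0 ≤ θ ≤ θ₀}`. -/
def annR' (θ₀ s : ℝ) : Set (Euc 2) :=
  {x | ∃ r θ : ℝ, s / 4 ≤ r ∧ r ≤ s ∧ 0 ≤ θ ∧ θ ≤ θ₀ ∧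
    x = mk2 (r * Real.cos θ) (r * Real.sin θ)}

/-! The orthogonal projection `p` onto `Pᵏ` is linear, so by polarization `‖p z‖ = c ‖z‖` on a
subspace is the same as `⟪p u, p v⟫ = c² ⟪u, v⟫` on it, and the latter passes from a set of
vectors to its span. Each plane `span {w, wᵢ}` contains `w`, which forces the angles to agree. Since
`w₁ + w₂ + w₃ = 0`, `V = span {w, w₁, w₂}`; every pair from `w, w₁, w₂` except `(w₁, w₂)` lies in
one of the planes, and that pair is handled by polarization with `w₁ + w₂ = -w₃`. The Gram
matrix of `w, w₁, w₂` has determinant `3/4`, so `dim V = 3`. -/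

section InnerProductSpace

variable {E F : Type*} [NormedAddCommGroup E] [InnerProductSpace ℝ E]
  [NormedAddCommGroup F] [InnerProductSpace ℝ F]

theorem inner_map_map_eq_of_norm_map_eq (f : E →ₗ[ℝ] F) {c : ℝ} {x y : E}
    (hx : ‖f x‖ = c * ‖x‖) (hy : ‖f y‖ = c * ‖y‖) (hxy : ‖f (x + y)‖ = c * ‖x + y‖) :
    ⟪f x, f y⟫ = c ^ 2 * ⟪x, y⟫ := by
  have h := congrArg (· ^ 2) hxy
  simp only [map_add, norm_add_sq_real, mul_pow, hx, hy] at h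
  linear_combination h / 2

theorem inner_map_map_eq_of_forall_mem (f : E →ₗ[ℝ] F) {c : ℝ} {K : Submodule ℝ E}
    (hK : ∀ z ∈ K, ‖f z‖ = c * ‖z‖) ⦃x y : E⦄ (hx : x ∈ K) (hy : y ∈ K) :
    ⟪f x, f y⟫ = c ^ 2 * ⟪x, y⟫ :=
  inner_map_map_eq_of_norm_map_eq f (hK x hx) (hK y hy) (hK _ (K.add_mem hx hy))

theorem norm_map_eq_of_inner_map_self (f : E →ₗ[ℝ] F) {c : ℝ} (hc : 0 ≤ c) {x : E}
    (h : ⟪f x, f x⟫ = c ^ 2 * ⟪x, x⟫) : ‖f x‖ = c * ‖x‖ := by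
  rw [real_inner_self_eq_norm_sq, real_inner_self_eq_norm_sq, ← mul_pow] at h
  exact (pow_left_inj₀ (norm_nonneg _) (by positivity) two_ne_zero).mp h

theorem inner_map_map_eq_of_mem_span (f : E →ₗ[ℝ] F) {c : ℝ} {s : Set E}
    (hs : ∀ u ∈ s, ∀ v ∈ s, ⟪f u, f v⟫ = c ^ 2 * ⟪u, v⟫) {x y : E}
    (hx : x ∈ Submodule.span ℝ s) (hy : y ∈ Submodule.span ℝ s) :
    ⟪f x, f y⟫ = c ^ 2 * ⟪x, y⟫ := by
  let B : E →ₗ[ℝ] E →ₗ[ℝ] ℝ := (innerₗ F).compl₁₂ f f - c ^ 2 • innerₗ E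
  have hB : ∀ u v, B u v = ⟪f u, f v⟫ - c ^ 2 * ⟪u, v⟫ := fun _ _ => rfl
  have hleft : ∀ u ∈ s, B u y = 0 := fun u hu =>
    LinearMap.eqOn_span' (f := B u) (g := 0) (fun v hv => sub_eq_zero.mpr (hs u hu v hv)) hy
  have := LinearMap.eqOn_span' (f := B.flip y) (g := 0) hleft hx
  simpa [hB, sub_eq_zero] using this

theorem norm_map_eq_of_mem_span_triple (f : E →ₗ[ℝ] F) {c : ℝ} (hc : 0 ≤ c)
    {w x y z : E} (hxyz : x + y + z = 0)
    (hx : ∀ v ∈ Submodule.span ℝ {w, x}, ‖f v‖ = c * ‖v‖)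
    (hy : ∀ v ∈ Submodule.span ℝ {w, y}, ‖f v‖ = c * ‖v‖) (hz : ‖f z‖ = c * ‖z‖) :
    ∀ v ∈ Submodule.span ℝ {w, x, y}, ‖f v‖ = c * ‖v‖ := by
  have hwX : w ∈ Submodule.span ℝ {w, x} := Submodule.subset_span (Set.mem_insert _ _)
  have hxX : x ∈ Submodule.span ℝ {w, x} := Submodule.subset_span (Set.mem_insert_of_mem _ rfl)
  have hwY : w ∈ Submodule.span ℝ {w, y} := Submodule.subset_span (Set.mem_insert _ _)
  have hyY : y ∈ Submodule.span ℝ {w, y} := Submodule.subset_span (Set.mem_insert_of_mem _ rfl)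
  have hxy : ⟪f x, f y⟫ = c ^ 2 * ⟪x, y⟫ := by
    refine inner_map_map_eq_of_norm_map_eq f (hx x hxX) (hy y hyY) ?_
    rw [eq_neg_of_add_eq_zero_left hxyz, map_neg, norm_neg, norm_neg, hz]
  have hX := inner_map_map_eq_of_forall_mem f hx
  have hY := inner_map_map_eq_of_forall_mem f hy
  have hyx : ⟪f y, f x⟫ = c ^ 2 * ⟪y, x⟫ := by rw [real_inner_comm, hxy, real_inner_comm]
  have hpairs : ∀ u ∈ ({w, x, y} : Set E), ∀ v ∈ ({w, x, y} : Set E),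
      ⟪f u, f v⟫ = c ^ 2 * ⟪u, v⟫ := by
    simp only [Set.forall_mem_insert, Set.mem_singleton_iff, forall_eq]
    exact ⟨⟨hX hwX hwX, hX hwX hxX, hY hwY hyY⟩, ⟨hX hxX hwX, hX hxX hxX, hxy⟩,
      ⟨hY hyY hwY, hyx, hY hyY hyY⟩⟩
  exact fun v hv => norm_map_eq_of_inner_map_self f hc (inner_map_map_eq_of_mem_span f hpairs hv hv)

theorem add_add_eq_zero_of_inner_eq_neg_half {ws : Fin 3 → E} (hws : ∀ i, ‖ws i‖ = 1)
    (hij : ∀ i j, i ≠ j → ⟪ws i, ws j⟫ = -(1 / 2)) : ws 0 + ws 1 + ws 2 = 0 := by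
  rw [← norm_eq_zero, ← sq_eq_zero_iff, ← real_inner_self_eq_norm_sq]
  simp only [inner_add_left, inner_add_right, real_inner_self_eq_norm_sq, hws,
    hij _ _ (by decide : (0 : Fin 3) ≠ 1), hij _ _ (by decide : (0 : Fin 3) ≠ 2),
    hij _ _ (by decide : (1 : Fin 3) ≠ 0), hij _ _ (by decide : (1 : Fin 3) ≠ 2),
    hij _ _ (by decide : (2 : Fin 3) ≠ 0), hij _ _ (by decide : (2 : Fin 3) ≠ 1)]
  norm_num

theorem finrank_span_triple {w x y : E} (hw : w ≠ 0) (hx : ‖x‖ = 1) (hy : ‖y‖ = 1)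
    (hwx : ⟪w, x⟫ = 0) (hwy : ⟪w, y⟫ = 0) (hxy : ⟪x, y⟫ = -(1 / 2)) :
    Module.finrank ℝ (Submodule.span ℝ {w, x, y}) = 3 := by
  have hli : LinearIndependent ℝ ![w, x, y] := by
    refine Matrix.linearIndependent_of_det_gram_ne_zero ?_
    have hdet : (Matrix.gram ℝ ![w, x, y]).det = 3 / 4 * ‖w‖ ^ 2 := by
      simp [Matrix.det_fin_three, hx, hy, hwx, hwy, hxy, real_inner_comm w, real_inner_comm x y]
      ring
    have := norm_pos_iff.mpr hw
    rw [hdet]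
    positivity
  have h := finrank_span_eq_card hli
  rwa [Matrix.range_cons, Matrix.range_cons_cons_empty, Set.singleton_union, Fintype.card_fin] at h

end InnerProductSpace

theorem span_range_eq_span_pair_of_add_add_eq_zero {R M : Type*} [Ring R] [AddCommGroup M]
    [Module R M] {ws : Fin 3 → M} (hws : ws 0 + ws 1 + ws 2 = 0) :
    Submodule.span R (range ws) = Submodule.span R {ws 0, ws 1} := by
  refine le_antisymm (Submodule.span_le.mpr ?_) (Submodule.span_mono ?_)
  · rintro _ ⟨i, rfl⟩
    fin_cases i
    · exact Submodule.subset_span (Set.mem_insert _ _)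
    · exact Submodule.subset_span (Set.mem_insert_of_mem _ rfl)
    · change ws 2 ∈ Submodule.span R {ws 0, ws 1}
      rw [show ws 2 = -(ws 0 + ws 1) from eq_neg_of_add_eq_zero_right hws]
      exact neg_mem (add_mem (Submodule.subset_span (Set.mem_insert _ _))
        (Submodule.subset_span (Set.mem_insert_of_mem _ rfl)))
  · rintro _ (rfl | rfl)
    exacts [⟨0, rfl⟩, ⟨1, rfl⟩]

theorem HasAngleBetween.unique {P₁ P₂ : Submodule ℝ (Euc n)} {α β : ℝ} {z : Euc n}
    (hα : HasAngleBetween P₁ P₂ α z) (hβ : HasAngleBetween P₁ P₂ β z) (hz : z ≠ 0)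
    (hα' : α ∈ Icc 0 Real.pi) (hβ' : β ∈ Icc 0 Real.pi) : α = β := by
  have hcos : Real.cos α * ‖z‖ = Real.cos β * ‖z‖ := hα.1.symm.trans hβ.1
  exact Real.injOn_cos hα' hβ' (mul_right_cancel₀ (norm_ne_zero_iff.mpr hz) hcos)

theorem isAnalyticSubspace_iff {P₁ P₂ : Submodule ℝ (Euc n)} {α : ℝ}
    {T : Submodule ℝ (Euc n)} :
    IsAnalyticSubspace P₁ P₂ α T ↔ (∀ z ∈ T, ‖P₁.starProjection z‖ = Real.cos α * ‖z‖) ∧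
      ∀ z ∈ T, ‖P₂.starProjection z‖ = Real.sin α * ‖z‖ := by
  refine ⟨fun h => ?_, fun h z hz _ => ⟨h.1 z hz, h.2 z hz⟩⟩
  constructor <;> intro z hz <;> rcases eq_or_ne z 0 with rfl | hz0
  exacts [by simp, (h z hz hz0).1, by simp, (h z hz hz0).2]

theorem IsAnalyticSubspace.span_triple {P₁ P₂ : Submodule ℝ (Euc n)} {α : ℝ}
    (hα : α ∈ Icc 0 (Real.pi / 2)) {w x y z : Euc n} (hxyz : x + y + z = 0)
    (hx : IsAnalyticSubspace P₁ P₂ α (Submodule.span ℝ {w, x}))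
    (hy : IsAnalyticSubspace P₁ P₂ α (Submodule.span ℝ {w, y}))
    (hz : IsAnalyticSubspace P₁ P₂ α (Submodule.span ℝ {w, z})) :
    IsAnalyticSubspace P₁ P₂ α (Submodule.span ℝ {w, x, y}) := by
  have hzmem : z ∈ Submodule.span ℝ {w, z} := Submodule.subset_span (Set.mem_insert_of_mem _ rfl)
  have hcos : 0 ≤ Real.cos α :=
    Real.cos_nonneg_of_mem_Icc ⟨by linarith [hα.1, Real.pi_pos], hα.2⟩
  have hsin : 0 ≤ Real.sin α :=
    Real.sin_nonneg_of_nonneg_of_le_pi hα.1 (by linarith [hα.2, Real.pi_pos])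
  rw [isAnalyticSubspace_iff] at hx hy hz ⊢
  exact ⟨norm_map_eq_of_mem_span_triple (P₁.starProjection : Euc n →ₗ[ℝ] Euc n) hcos hxyz
      hx.1 hy.1 (hz.1 z hzmem),
    norm_map_eq_of_mem_span_triple (P₂.starProjection : Euc n →ₗ[ℝ] Euc n) hsin hxyz
      hx.2 hy.2 (hz.2 z hzmem)⟩

theorem tangent_Y_cone_in_analytic_subspace_general
    (n : ℕ) (P₁ P₂ : Submodule ℝ (Euc n))
    (w : Euc n) (ws : Fin 3 → Euc n)
    (hw : ‖w‖ = 1) (hws : ∀ i, ‖ws i‖ = 1)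
    (hwo : ∀ i, ⟪w, ws i⟫ = 0)
    (hij : ∀ i j, i ≠ j → ⟪ws i, ws j⟫ = -(1 / 2))
    (α : Fin 3 → ℝ) (hα : ∀ i, α i ∈ Icc 0 (Real.pi / 2))
    (han : ∀ i, IsAnalyticSubspace P₁ P₂ (α i) (Submodule.span ℝ {w, ws i})) :
    ∃ a ∈ Icc (0 : ℝ) (Real.pi / 2), (∀ i, α i = a) ∧
      Module.finrank ℝ (Submodule.span ℝ (insert w (range ws))) = 3 ∧
      IsAnalyticSubspace P₁ P₂ a (Submodule.span ℝ (insert w (range ws))) := by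
  have hw0 : w ≠ 0 := norm_ne_zero_iff.mp (hw ▸ one_ne_zero)
  have hsum := add_add_eq_zero_of_inner_eq_neg_half hws hij
  have hα' : ∀ i, α i ∈ Icc 0 Real.pi := fun i =>
    Icc_subset_Icc_right (by linarith [Real.pi_pos]) (hα i)
  have hαeq : ∀ i, α i = α 0 := fun i =>
    (han i w (Submodule.subset_span (Set.mem_insert _ _)) hw0).unique
      (han 0 w (Submodule.subset_span (Set.mem_insert _ _)) hw0) hw0 (hα' i) (hα' 0)
  have hspan : Submodule.span ℝ (insert w (range ws)) = Submodule.span ℝ {w, ws 0, ws 1} := by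
    rw [Submodule.span_insert, span_range_eq_span_pair_of_add_add_eq_zero hsum,
      ← Submodule.span_insert]
  refine ⟨α 0, hα 0, hαeq, ?_, ?_⟩
  · rw [hspan]
    exact finrank_span_triple hw0 (hws 0) (hws 1) (hwo 0) (hwo 1) (hij 0 1 (by decide))
  · rw [hspan]
    exact IsAnalyticSubspace.span_triple (hα 0) hsum (han 0) (hαeq 1 ▸ han 1) (hαeq 2 ▸ han 2)

/-- **Position of tangent `Y` cones (Lemma 3.7, linear-algebra content).** Let `P¹ ⊥ P²`
with `P¹ ⊕ P² = ℝⁿ`. Let `w, w₁, w₂, w₃` be unit vectors with `w ⊥ w_i` and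
`⟨w_i, w_j⟩ = −1/2` for `i ≠ j`, and suppose each 2-plane `span{w, w_i}` is 2-analytic
between `P¹` and `P²` with some angle `α_i ∈ [0,π/2]`. Then all the `α_i` are equal to a
common `α`, the span `V` of `w, w₁, w₂, w₃` is 3-dimensional, and `V` is 3-analytic
between `P¹` and `P²` with angle `α`. -/
theorem tangent_Y_cone_in_analytic_subspace
    (n : ℕ) (P₁ P₂ : Submodule ℝ (Euc n))
    (horth : P₁ ≤ P₂ᗮ) (hcompl : P₁ ⊔ P₂ = ⊤)
    (w : Euc n) (ws : Fin 3 → Euc n)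
    (hw : ‖w‖ = 1) (hws : ∀ i, ‖ws i‖ = 1)
    (hwo : ∀ i, ⟪w, ws i⟫ = 0)
    (hij : ∀ i j, i ≠ j → ⟪ws i, ws j⟫ = -(1 / 2))
    (α : Fin 3 → ℝ) (hα : ∀ i, α i ∈ Icc 0 (Real.pi / 2))
    (han : ∀ i, IsAnalyticSubspace P₁ P₂ (α i) (Submodule.span ℝ {w, ws i})) :
    ∃ a ∈ Icc (0 : ℝ) (Real.pi / 2), (∀ i, α i = a) ∧
      Module.finrank ℝ (Submodule.span ℝ (insert w (range ws))) = 3 ∧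
      IsAnalyticSubspace P₁ P₂ a (Submodule.span ℝ (insert w (range ws))) :=
  tangent_Y_cone_in_analytic_subspace_general n P₁ P₂ w ws hw hws hwo hij α hα han
end
end

section
/- For every ε ∈ (0,1) there exists a constant C₂ = C₂(ε) > 100 such that the following holds: for every positive integer α, every r₀ ∈ (0,1), every δ > 0, and every u ∈ C¹(R_α, ℝ) satisfying u(x) ≥ δ r₀ − δ r₀/C₂ for all x ∈ L_α and u(x) < δ r₀/C₂ for all x ∈ K_α, one has ∫_{R_α} ‖∇u‖² dH² ≥ ε · (π δ² r₀²)/(α |log r₀|). -/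
open Set Metric MeasureTheory Filter Pointwise
open scoped ENNReal RealInnerProductSpace NNReal

noncomputable section

variable {n : ℕ}

/-!
Along the ray of angle `θ`, `u` drops by at least `M = δ r₀ (1 - 2 / C₂)` between `r = r₀` and
`r = 1`, so the fundamental theorem of calculus and Cauchy–Schwarz against the weight `dr / r`
give `M² ≤ log (1 / r₀) ∫_{r₀}^1 r ‖Du‖² dr`. Integrating over `θ ∈ [0, π / α]` in polar
coordinates bounds the Lebesgue integral of `‖Du‖²` over `R_α` by `π M² / (α |log r₀|)`, and
Mathlib's unnormalised `μH[2]` dominates Lebesgue measure on `ℝ²`.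
-/

theorem volume_le_hausdorffMeasure_euclideanSpace (ι : Type*) [Fintype ι] :
    (volume : Measure (EuclideanSpace ℝ ι)) ≤ μH[Fintype.card ι] := by
  refine Measure.le_intro fun s hs _ => ?_
  have hofLp : LipschitzWith 1 (WithLp.ofLp : EuclideanSpace ℝ ι → ι → ℝ) :=
    PiLp.lipschitzWith_ofLp 2 _
  have himage : WithLp.ofLp '' s = WithLp.toLp 2 ⁻¹' s := by
    ext x; exact ⟨by rintro ⟨y, hy, rfl⟩; simpa, fun hx => ⟨_, hx, rfl⟩⟩
  calc volume s = volume (WithLp.ofLp '' s) := by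
        rw [himage, (PiLp.volume_preserving_toLp ι).measure_preimage hs.nullMeasurableSet]
    _ = μH[Fintype.card ι] (WithLp.ofLp '' s) := by rw [hausdorffMeasure_pi_real]
    _ ≤ μH[Fintype.card ι] s :=
        (hofLp.hausdorffMeasure_image_le (Nat.cast_nonneg _) s).trans_eq (by simp)

instance isFiniteMeasureOnCompacts_hausdorffMeasure_euclideanSpace (ι : Type*) [Fintype ι] :
    IsFiniteMeasureOnCompacts (μH[Fintype.card ι] : Measure (EuclideanSpace ℝ ι)) := by
  have := isAddHaarMeasure_hausdorffMeasure (E := EuclideanSpace ℝ ι)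
  rw [finrank_euclideanSpace] at this
  infer_instance

theorem setIntegral_le_setIntegral_hausdorffMeasure {ι : Type*} [Fintype ι]
    {f : EuclideanSpace ℝ ι → ℝ} {s : Set (EuclideanSpace ℝ ι)} (hs : IsCompact s)
    (hf : ContinuousOn f s) (hf0 : ∀ x ∈ s, 0 ≤ f x) :
    ∫ x in s, f x ≤ ∫ x in s, f x ∂μH[Fintype.card ι] :=
  integral_mono_measure (Measure.restrict_mono subset_rfl
      (volume_le_hausdorffMeasure_euclideanSpace ι))
    ((ae_restrict_iff' hs.measurableSet).2 (Eventually.of_forall hf0))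
    (hf.integrableOn_compact hs)

/-- Cauchy–Schwarz with weight `1 / r`, via the discriminant of the nonnegative quadratic
`c ↦ ∫ (r φ r - c)² / r`. -/
theorem sq_intervalIntegral_le_log_mul_intervalIntegral {φ : ℝ → ℝ} {a b : ℝ} (ha : 0 < a)
    (hab : a ≤ b) (hφ : ContinuousOn φ (Icc a b)) :
    (∫ r in a..b, φ r) ^ 2 ≤ Real.log (b / a) * ∫ r in a..b, r * φ r ^ 2 := by
  have hpos : ∀ r ∈ Icc a b, 0 < r := fun r hr => ha.trans_le hr.1
  have hinv : ContinuousOn (fun r : ℝ => 1 / r) (Icc a b) :=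
    continuousOn_const.div continuousOn_id fun r hr => (hpos r hr).ne'
  have hint₁ : IntervalIntegrable (fun r => r * φ r ^ 2) volume a b :=
    (continuousOn_id.mul (hφ.pow 2)).intervalIntegrable_of_Icc (μ := volume) hab
  have hint₂ := hφ.intervalIntegrable_of_Icc (μ := volume) hab
  have hint₃ := hinv.intervalIntegrable_of_Icc (μ := volume) hab
  have hquad : ∀ c : ℝ, 0 ≤ Real.log (b / a) * (c * c) + (-2 * ∫ r in a..b, φ r) * c
      + ∫ r in a..b, r * φ r ^ 2 := by
    intro c
    have hsq : ∫ r in a..b, (r * φ r - c) ^ 2 / r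
        = (∫ r in a..b, r * φ r ^ 2) - 2 * c * (∫ r in a..b, φ r)
          + c ^ 2 * ∫ r in a..b, 1 / r := by
      rw [← intervalIntegral.integral_const_mul, ← intervalIntegral.integral_const_mul,
        ← intervalIntegral.integral_sub hint₁ (hint₂.const_mul _),
        ← intervalIntegral.integral_add (hint₁.sub (hint₂.const_mul _)) (hint₃.const_mul _)]
      refine intervalIntegral.integral_congr fun r hr => ?_
      rw [uIcc_of_le hab] at hr
      field_simp [(hpos r hr).ne']
      ring
    have h0 : 0 ≤ ∫ r in a..b, (r * φ r - c) ^ 2 / r :=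
      intervalIntegral.integral_nonneg hab fun r hr => by have := hpos r hr; positivity
    rw [hsq, integral_one_div_of_pos ha (ha.trans_le hab)] at h0
    linarith
  have := discrim_le_zero hquad
  rw [discrim] at this
  linarith

theorem abs_sub_le_norm_mul_integral_norm_fderiv_smul {E : Type*} [NormedAddCommGroup E]
    [NormedSpace ℝ E] {u : E → ℝ} {V : Set E} (hV : IsOpen V) (hu : ContDiffOn ℝ 1 u V)
    {v : E} {a b : ℝ} (hab : a ≤ b) (hray : ∀ r ∈ Icc a b, r • v ∈ V) :
    |u (b • v) - u (a • v)| ≤ ‖v‖ * ∫ r in a..b, ‖fderiv ℝ u (r • v)‖ := by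
  have hDu : ContinuousOn (fun r : ℝ => fderiv ℝ u (r • v)) (Icc a b) :=
    (hu.continuousOn_fderiv_of_isOpen hV le_rfl).comp (by fun_prop) hray
  have hderiv : ∀ r ∈ uIcc a b,
      HasDerivAt (fun r : ℝ => u (r • v)) (fderiv ℝ u (r • v) v) r := by
    intro r hr
    rw [uIcc_of_le hab] at hr
    have hdiff : DifferentiableAt ℝ u (r • v) :=
      (hu.differentiableOn one_ne_zero).differentiableAt (hV.mem_nhds (hray r hr))
    have hline : HasDerivAt (fun r : ℝ => r • v) v r := by
      simpa using (hasDerivAt_id r).smul_const v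
    exact hdiff.hasFDerivAt.comp_hasDerivAt r hline
  rw [← intervalIntegral.integral_eq_sub_of_hasDerivAt hderiv
    ((hDu.clm_apply continuousOn_const).intervalIntegrable_of_Icc hab),
    ← intervalIntegral.integral_const_mul]
  refine (intervalIntegral.abs_integral_le_integral_abs hab).trans
    (intervalIntegral.integral_mono_on hab ?_ ?_ fun r _ => ?_)
  · exact ((hDu.clm_apply continuousOn_const).abs).intervalIntegrable_of_Icc hab
  · exact (continuousOn_const.mul hDu.norm).intervalIntegrable_of_Icc hab
  · rw [mul_comm]
    exact (fderiv ℝ u (r • v)).le_opNorm v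

theorem sq_sub_le_log_mul_intervalIntegral_mul_sq_norm_fderiv {E : Type*}
    [NormedAddCommGroup E] [NormedSpace ℝ E] {u : E → ℝ} {V : Set E} (hV : IsOpen V)
    (hu : ContDiffOn ℝ 1 u V) {v : E} {a b : ℝ} (ha : 0 < a) (hab : a ≤ b)
    (hray : ∀ r ∈ Icc a b, r • v ∈ V) :
    (u (b • v) - u (a • v)) ^ 2
      ≤ ‖v‖ ^ 2 * (Real.log (b / a) * ∫ r in a..b, r * ‖fderiv ℝ u (r • v)‖ ^ 2) := by
  have hDu : ContinuousOn (fun r : ℝ => ‖fderiv ℝ u (r • v)‖) (Icc a b) :=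
    ((hu.continuousOn_fderiv_of_isOpen hV le_rfl).comp (by fun_prop) hray).norm
  have hI : 0 ≤ ∫ r in a..b, ‖fderiv ℝ u (r • v)‖ :=
    intervalIntegral.integral_nonneg hab fun _ _ => norm_nonneg _
  calc (u (b • v) - u (a • v)) ^ 2 = |u (b • v) - u (a • v)| ^ 2 := (sq_abs _).symm
    _ ≤ (‖v‖ * ∫ r in a..b, ‖fderiv ℝ u (r • v)‖) ^ 2 := by
        gcongr
        exact abs_sub_le_norm_mul_integral_norm_fderiv_smul hV hu hab hray
    _ ≤ ‖v‖ ^ 2 * (Real.log (b / a) * ∫ r in a..b, r * ‖fderiv ℝ u (r • v)‖ ^ 2) := by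
        rw [mul_pow]
        gcongr
        exact sq_intervalIntegral_le_log_mul_intervalIntegral ha hab hDu

def mk2Equiv : ℝ × ℝ ≃ᵐ Euc 2 :=
  MeasurableEquiv.finTwoArrow.symm.trans (MeasurableEquiv.toLp 2 (Fin 2 → ℝ))

theorem mk2Equiv_apply (p : ℝ × ℝ) : mk2Equiv p = mk2 p.1 p.2 := rfl

theorem measurePreserving_mk2Equiv : MeasurePreserving mk2Equiv :=
  (PiLp.volume_preserving_toLp (Fin 2)).comp ((volume_preserving_finTwoArrow ℝ).symm _)

theorem continuous_mk2Equiv : Continuous mk2Equiv :=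
  (PiLp.continuous_toLp 2 _).comp (ContinuousLinearEquiv.finTwoArrow ℝ ℝ).symm.continuous

theorem sectorR_eq_image (α : ℕ) (r₀ : ℝ) :
    sectorR α r₀ = (mk2Equiv ∘ polarCoord.symm) '' (Icc r₀ 1 ×ˢ Icc 0 (Real.pi / α)) := by
  ext x
  simp only [sectorR, mem_image, mem_prod, mem_Icc, Prod.exists, Function.comp_apply,
    mk2Equiv_apply, polarCoord_symm_apply]
  constructor
  · rintro ⟨r, θ, h₁, h₂, h₃, h₄, rfl⟩
    exact ⟨r, θ, ⟨⟨h₁, h₂⟩, h₃, h₄⟩, rfl⟩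
  · rintro ⟨r, θ, ⟨⟨h₁, h₂⟩, h₃, h₄⟩, rfl⟩
    exact ⟨r, θ, h₁, h₂, h₃, h₄, rfl⟩

theorem isCompact_sectorR (α : ℕ) (r₀ : ℝ) : IsCompact (sectorR α r₀) := by
  rw [sectorR_eq_image]
  exact (isCompact_Icc.prod isCompact_Icc).image
    (continuous_mk2Equiv.comp continuous_polarCoord_symm)

theorem setIntegral_image_mk2Equiv_polarCoord_symm {s : Set (ℝ × ℝ)} (hs : MeasurableSet s)
    (hst : s ⊆ polarCoord.target) (g : Euc 2 → ℝ) :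
    ∫ x in mk2Equiv '' (polarCoord.symm '' s), g x
      = ∫ q in s, q.1 * g (mk2Equiv (polarCoord.symm q)) := by
  rw [measurePreserving_mk2Equiv.setIntegral_image_emb mk2Equiv.measurableEmbedding,
    integral_image_eq_integral_abs_det_fderiv_smul volume hs
      (fun q _ => (hasFDerivAt_polarCoord_symm q).hasFDerivWithinAt)
      (polarCoord.symm.injOn.mono hst)]
  refine setIntegral_congr_fun hs fun q hq => ?_
  rw [det_fderivPolarCoordSymm, abs_of_pos (hst hq).1, smul_eq_mul]

theorem setIntegral_sectorR_ge_of_radial {α : ℕ} (hα : 0 < α) {r₀ : ℝ} (hr₀ : 0 < r₀)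
    {f : Euc 2 → ℝ} (hf : ContinuousOn f (sectorR α r₀)) (hf0 : ∀ x ∈ sectorR α r₀, 0 ≤ f x)
    {c : ℝ} (hc : ∀ θ ∈ Ioo 0 (Real.pi / α),
      c ≤ ∫ r in Ioo r₀ 1, r * f (mk2 (r * Real.cos θ) (r * Real.sin θ))) :
    Real.pi / α * c ≤ ∫ x in sectorR α r₀, f x := by
  set rect := Ioo r₀ 1 ×ˢ Ioo 0 (Real.pi / α)
  have hrect : rect ⊆ polarCoord.target := by
    rw [polarCoord_target]
    refine prod_mono (fun r hr => hr₀.trans hr.1) fun θ hθ =>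
      ⟨by linarith [hθ.1, Real.pi_pos], ?_⟩
    exact hθ.2.trans_le (div_le_self Real.pi_pos.le (by exact_mod_cast hα))
  have hsub : mk2Equiv '' (polarCoord.symm '' rect) ⊆ sectorR α r₀ := by
    rw [sectorR_eq_image, image_comp]
    exact image_mono (image_mono (prod_mono Ioo_subset_Icc_self Ioo_subset_Icc_self))
  set H : ℝ × ℝ → ℝ := fun q => q.1 * f (mk2Equiv (polarCoord.symm q))
  have hH : IntegrableOn H (Icc r₀ 1 ×ˢ Icc 0 (Real.pi / α)) := by
    have hmaps : MapsTo (mk2Equiv ∘ polarCoord.symm) (Icc r₀ 1 ×ˢ Icc 0 (Real.pi / α))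
        (sectorR α r₀) := by
      rw [sectorR_eq_image]
      exact mapsTo_image _ _
    exact ContinuousOn.integrableOn_compact (isCompact_Icc.prod isCompact_Icc)
      (continuousOn_fst.mul (hf.comp
        (continuous_mk2Equiv.comp continuous_polarCoord_symm).continuousOn hmaps))
  have hH' : Integrable H
      ((volume.restrict (Ioo r₀ 1)).prod (volume.restrict (Ioo 0 (Real.pi / α)))) := by
    rw [Measure.prod_restrict, ← Measure.volume_eq_prod]
    exact hH.mono_set (prod_mono Ioo_subset_Icc_self Ioo_subset_Icc_self)
  calc Real.pi / α * c = c * volume.real (Ioo 0 (Real.pi / α)) := by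
        rw [Real.volume_real_Ioo_of_le (by positivity), sub_zero, mul_comm]
    _ ≤ ∫ θ in Ioo 0 (Real.pi / α), ∫ r in Ioo r₀ 1, H (r, θ) :=
        setIntegral_ge_of_const_le_real measurableSet_Ioo measure_Ioo_lt_top.ne hc
          hH'.integral_prod_right
    _ = ∫ q in rect, H q := by
        rw [Measure.volume_eq_prod, ← Measure.prod_restrict, integral_prod_symm H hH']
    _ = ∫ x in mk2Equiv '' (polarCoord.symm '' rect), f x :=
        (setIntegral_image_mk2Equiv_polarCoord_symm (measurableSet_Ioo.prod measurableSet_Ioo)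
          hrect f).symm
    _ ≤ ∫ x in sectorR α r₀, f x :=
        setIntegral_mono_set (hf.integrableOn_compact (isCompact_sectorR α r₀))
          ((ae_restrict_iff' (isCompact_sectorR α r₀).measurableSet).2
            (Eventually.of_forall hf0))
          (Eventually.of_forall hsub)

theorem smul_mk2 (r a b : ℝ) : r • mk2 a b = mk2 (r * a) (r * b) := by
  ext i
  fin_cases i <;> simp [mk2]

theorem norm_mk2_cos_sin (θ : ℝ) : ‖mk2 (Real.cos θ) (Real.sin θ)‖ = 1 := by
  simp [mk2, EuclideanSpace.norm_eq, Fin.sum_univ_two]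

theorem sector_energy_ge_of_radial_drop {α : ℕ} (hα : 0 < α) {r₀ : ℝ} (hr₀ : 0 < r₀)
    (hr₁ : r₀ < 1) {u : Euc 2 → ℝ} {V : Set (Euc 2)} (hV : IsOpen V) (hRV : sectorR α r₀ ⊆ V)
    (hu : ContDiffOn ℝ 1 u V) {M : ℝ} (hM : 0 ≤ M)
    (hgap : ∀ θ ∈ Icc 0 (Real.pi / α),
      M ≤ u (mk2 (r₀ * Real.cos θ) (r₀ * Real.sin θ)) - u (mk2 (Real.cos θ) (Real.sin θ))) :
    Real.pi / α * (M ^ 2 / |Real.log r₀|)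
      ≤ ∫ x in sectorR α r₀, ‖fderiv ℝ u x‖ ^ 2 ∂μH[(2:ℝ)] := by
  have hf : ContinuousOn (fun x => ‖fderiv ℝ u x‖ ^ 2) (sectorR α r₀) :=
    ((hu.continuousOn_fderiv_of_isOpen hV le_rfl).norm.pow 2).mono hRV
  have hvol := setIntegral_le_setIntegral_hausdorffMeasure (isCompact_sectorR α r₀) hf
    fun _ _ => by positivity
  rw [Fintype.card_fin] at hvol
  refine (setIntegral_sectorR_ge_of_radial hα hr₀ hf (fun _ _ => by positivity)
    fun θ hθ => ?_).trans hvol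
  set v := mk2 (Real.cos θ) (Real.sin θ)
  have hray : ∀ r ∈ Icc r₀ 1, r • v ∈ V := fun r hr => by
    rw [smul_mk2]
    exact hRV ⟨r, θ, hr.1, hr.2, hθ.1.le, hθ.2.le, rfl⟩
  have hlog : |Real.log r₀| = Real.log (1 / r₀) := by
    rw [abs_of_neg (Real.log_neg hr₀ hr₁), one_div, Real.log_inv]
  have hradial := sq_sub_le_log_mul_intervalIntegral_mul_sq_norm_fderiv hV hu hr₀ hr₁.le hray
  rw [norm_mk2_cos_sin, one_pow, one_mul, one_smul, ← hlog,
    intervalIntegral.integral_of_le hr₁.le, integral_Ioc_eq_integral_Ioo] at hradial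
  simp only [v, smul_mk2] at hradial
  rw [div_le_iff₀' (abs_pos.2 (Real.log_neg hr₀ hr₁).ne)]
  refine le_trans ?_ hradial
  nlinarith [hgap θ (Ioo_subset_Icc_self hθ)]

/-- **Energy lower bound on a sector (Proposition 7.11).** For every `ε ∈ (0,1)` there is
`C₂ = C₂(ε) > 100` such that for every positive integer `α`, `r₀ ∈ (0,1)`, `δ > 0` and
`u ∈ C¹(R_α, ℝ)` with `u ≥ δr₀ − δr₀/C₂` on `L_α` and `u < δr₀/C₂` on `K_α`, one has
`∫_{R_α} |∇u|² ≥ ε·πδ²r₀²/(α|log r₀|)`. -/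
theorem sector_energy_lower_bound
    (ε : ℝ) (hε : ε ∈ Ioo (0 : ℝ) 1) :
    ∃ C₂ : ℝ, 100 < C₂ ∧
      ∀ (α : ℕ), 0 < α → ∀ r₀ : ℝ, 0 < r₀ → r₀ < 1 → ∀ δ : ℝ, 0 < δ →
        ∀ (u : Euc 2 → ℝ) (V : Set (Euc 2)), IsOpen V → sectorR α r₀ ⊆ V →
          ContDiffOn ℝ 1 u V →
          (∀ x ∈ sectorL α r₀, δ * r₀ - δ * r₀ / C₂ ≤ u x) →
          (∀ x ∈ sectorK α, u x < δ * r₀ / C₂) →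
          ε * (Real.pi * δ ^ 2 * r₀ ^ 2) / (α * |Real.log r₀|) ≤
            ∫ x in sectorR α r₀, ‖fderiv ℝ u x‖ ^ 2 ∂μH[(2:ℝ)] := by
  have hε₁ : 0 < 1 - ε := sub_pos.2 hε.2
  set C₂ := 100 + 4 / (1 - ε)
  have hC₂ : 100 < C₂ := lt_add_of_pos_right _ (by positivity)
  -- `4 / C₂ < 1 - ε`, so `(1 - 2 / C₂) ^ 2 ≥ 1 - 4 / C₂ > ε`
  have hεC₂ : ε ≤ (1 - 2 / C₂) ^ 2 := by
    have h4 : 4 / C₂ < 1 - ε := by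
      rw [div_lt_iff₀ (by linarith), mul_comm, ← div_lt_iff₀ hε₁]
      linarith
    have hexpand : (1 - 2 / C₂) ^ 2 = 1 - 4 / C₂ + (2 / C₂) ^ 2 := by ring
    linarith [sq_nonneg (2 / C₂)]
  refine ⟨C₂, hC₂, fun α hα r₀ hr₀ hr₁ δ hδ u V hV hRV hu hL hK => ?_⟩
  have hM : 0 ≤ δ * r₀ * (1 - 2 / C₂) :=
    mul_nonneg (by positivity) (sub_nonneg.2 ((div_le_one (by linarith)).2 (by linarith)))
  refine le_trans ?_ (sector_energy_ge_of_radial_drop hα hr₀ hr₁ hV hRV hu hM fun θ hθ => ?_)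
  · calc ε * (Real.pi * δ ^ 2 * r₀ ^ 2) / (α * |Real.log r₀|)
          = Real.pi / α * (ε * (δ * r₀) ^ 2 / |Real.log r₀|) := by field_simp
      _ ≤ Real.pi / α * ((δ * r₀ * (1 - 2 / C₂)) ^ 2 / |Real.log r₀|) := by
        rw [mul_pow _ (1 - 2 / C₂), mul_comm ε]
        gcongr
  · have hin := hL _ ⟨θ, hθ.1, hθ.2, rfl⟩
    have hout := hK _ ⟨θ, hθ.1, hθ.2, rfl⟩
    have hM_eq : δ * r₀ * (1 - 2 / C₂) = δ * r₀ - δ * r₀ / C₂ - δ * r₀ / C₂ := by ring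
    linarith

end
end
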